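/- arXiv:2310.19219 — 2 statements merged into one kernel-verified Lean document; each statement's English description precedes it below -/
import Mathlib

section
/- Let f : K → ℝ be centered, i.e. ⟨f⟩^s = 0. Then for every x ∈ K the integral V(x) = ∫₀^∞ (e^{tL} f)(x) dt converges, the function V satisfies the Poisson equation LV(x) + f(x) = 0 for all x ∈ K, and ⟨V⟩^s = 0. -/
open scoped Classical

/-- The backward generator `L` of the Markov jump process with rates `k`:
`L x y = k x y` for `x ≠ y` and `L x x = -∑_{z ≠ x} k x z`. -/
noncomputable def gen {K : Type*} [Fintype K] [DecidableEq K] (k : K → K → ℝ) :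
    Matrix K K ℝ :=
  Matrix.of fun x y => if x = y then -∑ z ∈ Finset.univ.erase x, k x z else k x y

/-- Strong connectivity (irreducibility) of the digraph with an arc `(x,y)` whenever
`k x y > 0`. -/
def StronglyConnected {K : Type*} (k : K → K → ℝ) : Prop :=
  ∀ x y : K, Relation.ReflTransGen (fun a b => 0 < k a b) x y

/-!
The semigroup `P t = exp (t • L)` consists of stochastic matrices fixing `ρ`, and irreducibility
makes every entry of `P 1` positive, so `P 1 x y ≥ δ ρ y` for some `δ ∈ (0, 1)` (Doeblin's
condition). Subtracting the rank-one part `δ 𝟙 ρ`, which kills `ρ`-centered vectors, shows that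
`P 1` contracts centered vectors by `1 - δ` in the sup norm; as `P t` is a sup-norm contraction
for every `t ≥ 0`, `P t f` decays exponentially. Hence `V = ∫₀^∞ P t f dt` converges, and
integrating `d/dt (P t f) = L (P t f)` over `(0, ∞)` gives `L V = -f`, while `ρ ⬝ V = 0` because
every `P t f` is centered.
-/

open Matrix NormedSpace Filter Topology MeasureTheory Set
open scoped Nat

lemma pow_floor_le_inv_mul_exp {r : ℝ} (hr0 : 0 < r) (hr1 : r ≤ 1) (t : ℝ) :
    r ^ ⌊t⌋₊ ≤ r⁻¹ * Real.exp (Real.log r * t) := by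
  calc r ^ ⌊t⌋₊ = r ^ (⌊t⌋₊ : ℝ) := (Real.rpow_natCast r _).symm
    _ ≤ r ^ (t - 1) := Real.rpow_le_rpow_of_exponent_ge hr0 hr1 (Nat.sub_one_lt_floor t).le
    _ = r⁻¹ * Real.exp (Real.log r * t) := by
      rw [Real.rpow_sub_one hr0.ne', Real.rpow_def_of_pos hr0, div_eq_inv_mul]

lemma integrableOn_Ioi_of_norm_le_exp {E : Type*} [NormedAddCommGroup E] {g : ℝ → E}
    (hg : Continuous g) {C a : ℝ} (ha : 0 < a) (h : ∀ t, 0 ≤ t → ‖g t‖ ≤ C * Real.exp (-a * t)) :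
    IntegrableOn g (Ioi 0) :=
  ((exp_neg_integrableOn_Ioi 0 ha).const_mul C).mono' hg.aestronglyMeasurable
    (ae_restrict_of_forall_mem measurableSet_Ioi fun t ht => h t (le_of_lt ht))

namespace Matrix

attribute [local instance] Matrix.linftyOpNormedRing Matrix.linftyOpNormedAlgebra

variable {K : Type*} [Fintype K]

section Exp

variable [DecidableEq K]

lemma hasSum_exp_apply (A : Matrix K K ℝ) (x y : K) :
    HasSum (fun n : ℕ => (n !⁻¹ : ℝ) * (A ^ n) x y) (exp A x y) :=
  Pi.hasSum.1 (Pi.hasSum.1 (exp_series_hasSum_exp' (𝕂 := ℝ) A) x) y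

lemma hasSum_exp_mulVec (A : Matrix K K ℝ) (v : K → ℝ) :
    HasSum (fun n : ℕ => (n !⁻¹ : ℝ) • (A ^ n *ᵥ v)) (exp A *ᵥ v) := by
  refine Pi.hasSum.2 fun x => ?_
  simpa [mulVec, dotProduct, Finset.mul_sum, mul_assoc] using
    hasSum_sum fun y _ => (hasSum_exp_apply A x y).mul_right (v y)

lemma exp_mulVec_eq_self {A : Matrix K K ℝ} {v : K → ℝ} (h : A *ᵥ v = 0) :
    exp A *ᵥ v = v := by
  refine (hasSum_exp_mulVec A v).unique ?_
  convert hasSum_single (f := fun n : ℕ => (n !⁻¹ : ℝ) • (A ^ n *ᵥ v)) 0 fun n hn => ?_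
  · simp
  · obtain ⟨m, rfl⟩ := Nat.exists_eq_succ_of_ne_zero hn
    rw [pow_succ, ← mulVec_mulVec, h, mulVec_zero, smul_zero]

lemma vecMul_exp_eq_self {A : Matrix K K ℝ} {ρ : K → ℝ} (h : ρ ᵥ* A = 0) :
    ρ ᵥ* exp A = ρ := by
  rw [← mulVec_transpose, ← exp_transpose]
  exact exp_mulVec_eq_self (by rwa [mulVec_transpose])

lemma exists_pow_apply_pos_of_reflTransGen {M : Matrix K K ℝ} (hM : ∀ x y, 0 ≤ M x y)
    {R : K → K → Prop} (hR : ∀ a b, R a b → 0 < M a b) {x y : K}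
    (h : Relation.ReflTransGen R x y) : ∃ m : ℕ, 0 < (M ^ m) x y := by
  induction h with
  | refl => exact ⟨0, by simp⟩
  | @tail b c _ hbc ih =>
    obtain ⟨m, hm⟩ := ih
    refine ⟨m + 1, ?_⟩
    rw [pow_succ, mul_apply]
    exact lt_of_lt_of_le (mul_pos hm (hR b c hbc)) <|
      Finset.single_le_sum (f := fun z => (M ^ m) x z * M z c)
        (fun z _ => mul_nonneg (Matrix.pow_apply_nonneg hM m x z) (hM z c)) (Finset.mem_univ b)

lemma exp_apply_nonneg {M : Matrix K K ℝ} (hM : ∀ x y, 0 ≤ M x y) (x y : K) :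
    0 ≤ exp M x y :=
  (hasSum_exp_apply M x y).nonneg fun n =>
    mul_nonneg (by positivity) (Matrix.pow_apply_nonneg hM n x y)

lemma exp_apply_pos_of_pow_apply_pos {M : Matrix K K ℝ} (hM : ∀ x y, 0 ≤ M x y) {x y : K}
    {m : ℕ} (hm : 0 < (M ^ m) x y) : 0 < exp M x y :=
  lt_of_lt_of_le (by positivity) <| le_hasSum (hasSum_exp_apply M x y) m
    fun n _ => mul_nonneg (by positivity) (Matrix.pow_apply_nonneg hM n x y)

lemma exp_eq_exp_neg_smul_exp_add_smul_one (A : Matrix K K ℝ) (c : ℝ) :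
    exp A = Real.exp (-c) • exp (A + c • 1) := by
  have hc : exp ((-c) • (1 : Matrix K K ℝ)) = Real.exp (-c) • 1 := by
    have := algebraMap_exp_comm (𝕂 := ℝ) (𝔸 := Matrix K K ℝ) (-c)
    rw [← Real.exp_eq_exp_ℝ, Algebra.algebraMap_eq_smul_one,
      Algebra.algebraMap_eq_smul_one] at this
    exact this.symm
  rw [← smul_one_mul, ← hc, ← Matrix.exp_add_of_commute _ _ ((Commute.one_left _).smul_left _)]
  congr 1
  module

lemma hasDerivAt_exp_smul_mulVec (A : Matrix K K ℝ) (v : K → ℝ) (t : ℝ) :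
    HasDerivAt (fun s : ℝ => exp (s • A) *ᵥ v) (A *ᵥ (exp (t • A) *ᵥ v)) t := by
  have h := (LinearMap.toContinuousLinearMap ((mulVecBilin ℝ ℝ).flip v)).hasFDerivAt
    |>.comp_hasDerivAt t (hasDerivAt_exp_smul_const' (𝕂 := ℝ) A t)
  rwa [mulVec_mulVec]

end Exp

section OffDiagNonneg

variable [DecidableEq K] {A : Matrix K K ℝ}

lemma exists_add_smul_one_nonneg (hA : ∀ x y, x ≠ y → 0 ≤ A x y) :
    ∃ c : ℝ, (∀ x y, 0 ≤ (A + c • 1) x y) ∧ ∀ x, 0 < (A + c • 1) x x := by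
  have hdiag : ∀ x, 0 < (A + (1 + ∑ z, |A z z|) • 1) x x := fun x => by
    have := Finset.single_le_sum (fun z _ => abs_nonneg (A z z)) (Finset.mem_univ x)
    simp only [add_apply, smul_apply, one_apply_eq, smul_eq_mul, mul_one]
    linarith [neg_abs_le (A x x)]
  refine ⟨_, fun x y => ?_, hdiag⟩
  rcases eq_or_ne x y with rfl | hxy
  · exact (hdiag x).le
  · simpa [one_apply_ne hxy] using hA x y hxy

lemma exp_apply_nonneg_of_offDiag_nonneg (hA : ∀ x y, x ≠ y → 0 ≤ A x y) (x y : K) :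
    0 ≤ exp A x y := by
  obtain ⟨c, hc, -⟩ := exists_add_smul_one_nonneg hA
  rw [exp_eq_exp_neg_smul_exp_add_smul_one A c, smul_apply, smul_eq_mul]
  exact mul_nonneg (Real.exp_pos _).le (exp_apply_nonneg hc x y)

lemma exp_apply_pos_of_reflTransGen (hA : ∀ x y, x ≠ y → 0 ≤ A x y) {R : K → K → Prop}
    (hR : ∀ a b, a ≠ b → R a b → 0 < A a b) {x y : K} (h : Relation.ReflTransGen R x y) :
    0 < exp A x y := by
  obtain ⟨c, hc, hdiag⟩ := exists_add_smul_one_nonneg hA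
  have hRpos : ∀ a b, R a b → 0 < (A + c • 1) a b := fun a b hab => by
    rcases eq_or_ne a b with rfl | hne
    · exact hdiag a
    · simpa [one_apply_ne hne] using hR a b hne hab
  obtain ⟨m, hm⟩ := exists_pow_apply_pos_of_reflTransGen hc hRpos h
  rw [exp_eq_exp_neg_smul_exp_add_smul_one A c, smul_apply, smul_eq_mul]
  exact mul_pos (Real.exp_pos _) (exp_apply_pos_of_pow_apply_pos hc hm)

lemma sum_exp_apply_eq_one (hrow : ∀ x, ∑ y, A x y = 0) (x : K) : ∑ y, exp A x y = 1 := by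
  have h : A *ᵥ 1 = 0 := funext fun x => by simp [mulVec, dotProduct, hrow]
  simpa [mulVec, dotProduct] using congrFun (exp_mulVec_eq_self h) x

end OffDiagNonneg

section Contraction

lemma norm_mulVec_le_of_nonneg {P : Matrix K K ℝ} {s : ℝ} (hP : ∀ x y, 0 ≤ P x y)
    (hrow : ∀ x, ∑ y, P x y ≤ s) (v : K → ℝ) : ‖P *ᵥ v‖ ≤ s * ‖v‖ := by
  rcases isEmpty_or_nonempty K with hK | ⟨⟨x₀⟩⟩
  · simp [Subsingleton.elim v 0]
  have hs : 0 ≤ s := (Finset.sum_nonneg fun y _ => hP x₀ y).trans (hrow x₀)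
  refine (pi_norm_le_iff_of_nonneg (by positivity)).2 fun x => ?_
  calc ‖(P *ᵥ v) x‖ = ‖∑ y, P x y * v y‖ := rfl
    _ ≤ ∑ y, P x y * ‖v‖ := (norm_sum_le _ _).trans <| Finset.sum_le_sum fun y _ => by
        rw [norm_mul, Real.norm_of_nonneg (hP x y)]
        exact mul_le_mul_of_nonneg_left (norm_le_pi_norm v y) (hP x y)
    _ ≤ s * ‖v‖ := by rw [← Finset.sum_mul]; gcongr; exact hrow x

lemma norm_mulVec_le_of_minorization {P : Matrix K K ℝ} {ρ v : K → ℝ} {δ : ℝ}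
    (hPρ : ∀ x y, δ * ρ y ≤ P x y) (hrow : ∀ x, ∑ y, P x y = 1) (hρ : ∑ y, ρ y = 1)
    (hv : ρ ⬝ᵥ v = 0) : ‖P *ᵥ v‖ ≤ (1 - δ) * ‖v‖ := by
  set Q : Matrix K K ℝ := of fun x y => P x y - δ * ρ y
  have hQ : Q *ᵥ v = P *ᵥ v := funext fun x => by
    simp only [Q, mulVec, dotProduct, of_apply, sub_mul, Finset.sum_sub_distrib, mul_assoc,
      ← Finset.mul_sum]
    rw [show ∑ i, ρ i * v i = 0 from hv, mul_zero, sub_zero]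
  rw [← hQ]
  refine norm_mulVec_le_of_nonneg (fun x y => sub_nonneg.2 (hPρ x y)) (fun x => ?_) v
  simp [Finset.sum_sub_distrib, hrow, ← Finset.mul_sum, hρ]

lemma exists_minorization {P : Matrix K K ℝ} (hP : ∀ x y, 0 < P x y) (ρ : K → ℝ) :
    ∃ δ, 0 < δ ∧ δ < 1 ∧ ∀ x y, δ * ρ y ≤ P x y := by
  have h : ∀ᶠ δ in 𝓝 (0 : ℝ), δ < 1 ∧ ∀ x y, δ * ρ y ≤ P x y := by
    refine (eventually_lt_nhds one_pos).and ?_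
    simp only [eventually_all]
    intro x y
    exact ((continuous_id.mul continuous_const).continuousAt.eventually_lt continuousAt_const
      (by simpa using hP x y)).mono fun δ h => h.le
  obtain ⟨δ, ⟨h1, h2⟩, h0⟩ :=
    ((h.filter_mono (nhdsWithin_le_nhds (s := Ioi 0))).and self_mem_nhdsWithin).exists
  exact ⟨δ, h0, h1, h2⟩

lemma norm_pow_mulVec_le_of_minorization [DecidableEq K] {P : Matrix K K ℝ} {ρ : K → ℝ}
    {δ : ℝ} (hδ : δ ≤ 1) (hPρ : ∀ x y, δ * ρ y ≤ P x y) (hrow : ∀ x, ∑ y, P x y = 1)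
    (hρ : ∑ y, ρ y = 1) (hstat : ρ ᵥ* P = ρ) (n : ℕ) {v : K → ℝ} (hv : ρ ⬝ᵥ v = 0) :
    ‖(P ^ n) *ᵥ v‖ ≤ (1 - δ) ^ n * ‖v‖ := by
  induction n generalizing v with
  | zero => simp
  | succ n ih =>
    have hPv : ρ ⬝ᵥ (P *ᵥ v) = 0 := by rwa [dotProduct_mulVec, hstat]
    have hδ' : 0 ≤ 1 - δ := sub_nonneg.2 hδ
    calc ‖(P ^ (n + 1)) *ᵥ v‖ = ‖(P ^ n) *ᵥ (P *ᵥ v)‖ := by rw [pow_succ, mulVec_mulVec]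
      _ ≤ (1 - δ) ^ n * ((1 - δ) * ‖v‖) :=
        (ih hPv).trans (by gcongr; exact norm_mulVec_le_of_minorization hPρ hrow hρ hv)
      _ = (1 - δ) ^ (n + 1) * ‖v‖ := by ring

end Contraction

section Semigroup

variable [DecidableEq K]

theorem exists_norm_exp_smul_mulVec_le {A : Matrix K K ℝ} (hA : ∀ x y, x ≠ y → 0 ≤ A x y)
    (hrow : ∀ x, ∑ y, A x y = 0) (hpos : ∀ x y, 0 < exp A x y) {ρ : K → ℝ}
    (hρ : ∑ y, ρ y = 1) (hstat : ρ ᵥ* A = 0) :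
    ∃ C a : ℝ, 0 < a ∧ ∀ v : K → ℝ, ρ ⬝ᵥ v = 0 → ∀ t : ℝ, 0 ≤ t →
      ‖exp (t • A) *ᵥ v‖ ≤ C * ‖v‖ * Real.exp (-a * t) := by
  obtain ⟨δ, hδ0, hδ1, hPρ⟩ := exists_minorization hpos ρ
  have hr0 : 0 < 1 - δ := by linarith
  refine ⟨(1 - δ)⁻¹, -Real.log (1 - δ), neg_pos.2 (Real.log_neg hr0 (by linarith)),
    fun v hv t ht => ?_⟩
  have hsmul_row : ∀ s : ℝ, ∀ x, ∑ y, (s • A) x y = 0 := fun s x => by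
    simp [← Finset.mul_sum, hrow]
  have hsplit : exp (t • A) = exp ((t - ⌊t⌋₊) • A) * exp A ^ ⌊t⌋₊ := by
    rw [← Matrix.exp_nsmul, ← Matrix.exp_add_of_commute _ _
      (((Commute.refl A).smul_left _).smul_right _), ← Nat.cast_smul_eq_nsmul ℝ, ← add_smul,
      sub_add_cancel]
  have hfrac : ∀ x y, 0 ≤ exp ((t - ⌊t⌋₊) • A) x y :=
    exp_apply_nonneg_of_offDiag_nonneg fun x y hxy =>
      mul_nonneg (sub_nonneg.2 (Nat.floor_le ht)) (hA x y hxy)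
  calc ‖exp (t • A) *ᵥ v‖ = ‖exp ((t - ⌊t⌋₊) • A) *ᵥ (exp A ^ ⌊t⌋₊ *ᵥ v)‖ := by
        rw [hsplit, mulVec_mulVec]
    _ ≤ 1 * ‖exp A ^ ⌊t⌋₊ *ᵥ v‖ :=
        norm_mulVec_le_of_nonneg hfrac (fun x => (sum_exp_apply_eq_one (hsmul_row _) x).le) _
    _ ≤ (1 - δ) ^ ⌊t⌋₊ * ‖v‖ := by
        rw [one_mul]
        exact norm_pow_mulVec_le_of_minorization hδ1.le hPρ (sum_exp_apply_eq_one hrow) hρ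
          (vecMul_exp_eq_self hstat) _ hv
    _ ≤ (1 - δ)⁻¹ * Real.exp (Real.log (1 - δ) * t) * ‖v‖ := by
        gcongr
        exact pow_floor_le_inv_mul_exp hr0 (by linarith) t
    _ = (1 - δ)⁻¹ * ‖v‖ * Real.exp (-(-Real.log (1 - δ)) * t) := by ring_nf

lemma mulVec_integral_exp_smul_mulVec_eq_neg (A : Matrix K K ℝ) (v : K → ℝ)
    (hint : IntegrableOn (fun t : ℝ => exp (t • A) *ᵥ v) (Ioi 0)) :
    A *ᵥ ∫ t in Ioi (0 : ℝ), exp (t • A) *ᵥ v = -v := by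
  let Aₗ : (K → ℝ) →L[ℝ] (K → ℝ) := LinearMap.toContinuousLinearMap (mulVecLin A)
  have hderiv : ∀ t ∈ Ici (0 : ℝ), HasDerivAt (fun s : ℝ => exp (s • A) *ᵥ v)
      (Aₗ (exp (t • A) *ᵥ v)) t := fun t _ => hasDerivAt_exp_smul_mulVec A v t
  have hint' := Aₗ.integrable_comp hint
  have hlim := tendsto_zero_of_hasDerivAt_of_integrableOn_Ioi (fun t ht => hderiv t ht.out.le)
    hint' hint
  have hftc := integral_Ioi_of_hasDerivAt_of_tendsto' hderiv hint' hlim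
  rw [Aₗ.integral_comp_comm hint] at hftc
  simpa [Aₗ] using hftc

lemma dotProduct_integral_exp_smul_mulVec_eq_zero {A : Matrix K K ℝ} {ρ v : K → ℝ}
    (hstat : ρ ᵥ* A = 0) (hv : ρ ⬝ᵥ v = 0)
    (hint : IntegrableOn (fun t : ℝ => exp (t • A) *ᵥ v) (Ioi 0)) :
    ρ ⬝ᵥ ∫ t in Ioi (0 : ℝ), exp (t • A) *ᵥ v = 0 := by
  let ρₗ : (K → ℝ) →L[ℝ] ℝ := LinearMap.toContinuousLinearMap (dotProductBilin ℝ ℝ ρ)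
  have h : ∀ t : ℝ, ρ ⬝ᵥ (exp (t • A) *ᵥ v) = 0 := fun t => by
    rw [dotProduct_mulVec, vecMul_exp_eq_self (by rw [vecMul_smul, hstat, smul_zero]), hv]
  change ρₗ _ = 0
  rw [← ρₗ.integral_comp_comm hint]
  simp [ρₗ, h]

end Semigroup

end Matrix

section Generator

variable {K : Type*} [Fintype K] [DecidableEq K]

lemma gen_apply_of_ne (k : K → K → ℝ) {x y : K} (h : x ≠ y) : gen k x y = k x y := by
  simp [gen, h]

lemma sum_gen_apply (k : K → K → ℝ) (x : K) : ∑ y, gen k x y = 0 := by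
  rw [← Finset.add_sum_erase _ _ (Finset.mem_univ x),
    Finset.sum_congr rfl fun y hy => gen_apply_of_ne k (Finset.ne_of_mem_erase hy).symm]
  simp [gen]

lemma gen_mulVec_apply (k : K → K → ℝ) (v : K → ℝ) (x : K) :
    (gen k *ᵥ v) x = ∑ y, k x y * (v y - v x) := by
  simp only [mulVec, dotProduct]
  rw [← Finset.add_sum_erase _ _ (Finset.mem_univ x),
    ← Finset.add_sum_erase _ (fun y => k x y * (v y - v x)) (Finset.mem_univ x),
    Finset.sum_congr rfl fun y hy => by rw [gen_apply_of_ne k (Finset.ne_of_mem_erase hy).symm]]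
  simp only [gen, of_apply, if_pos, sub_self, mul_zero, zero_add]
  rw [Finset.sum_congr rfl fun y _ => mul_sub (k x y) (v y) (v x), Finset.sum_sub_distrib,
    ← Finset.sum_mul]
  ring

end Generator

theorem quasipotential_integral_solves_poisson_general
    {K : Type*} [Fintype K] [DecidableEq K]
    (k : K → K → ℝ) (hk : ∀ x y : K, x ≠ y → 0 ≤ k x y)
    (hirr : StronglyConnected k)
    (ρ : K → ℝ) (hρsum : ∑ x, ρ x = 1)
    (hρstat : Matrix.vecMul ρ (gen k) = 0)
    (f : K → ℝ) (hf : ∑ x, f x * ρ x = 0)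
    (V : K → ℝ)
    (hV : ∀ x, V x = ∫ t in Set.Ioi (0 : ℝ), (NormedSpace.exp (t • gen k)).mulVec f x) :
    (∀ x, MeasureTheory.IntegrableOn
        (fun t : ℝ => (NormedSpace.exp (t • gen k)).mulVec f x) (Set.Ioi 0)) ∧
    (∀ x, (∑ y, k x y * (V y - V x)) + f x = 0) ∧
    (∑ x, V x * ρ x = 0) := by
  have hoff : ∀ x y, x ≠ y → 0 ≤ gen k x y := fun x y h => (gen_apply_of_ne k h).symm ▸ hk x y h
  have hpos : ∀ x y, 0 < exp (gen k) x y := fun x y =>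
    exp_apply_pos_of_reflTransGen hoff (fun a b hab h => (gen_apply_of_ne k hab).symm ▸ h)
      (hirr x y)
  have hρf : ρ ⬝ᵥ f = 0 := by rw [dotProduct_comm]; exact hf
  obtain ⟨C, a, ha, hdecay⟩ :=
    exists_norm_exp_smul_mulVec_le hoff (sum_gen_apply k) hpos hρsum hρstat
  have hint : IntegrableOn (fun t : ℝ => exp (t • gen k) *ᵥ f) (Ioi 0) :=
    integrableOn_Ioi_of_norm_le_exp
      (continuous_iff_continuousAt.2 fun t => (hasDerivAt_exp_smul_mulVec _ f t).continuousAt)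
      ha (hdecay f hρf)
  have hV' : V = ∫ t in Ioi (0 : ℝ), exp (t • gen k) *ᵥ f :=
    funext fun x => (hV x).trans (eval_integral hint.eval x).symm
  refine ⟨hint.eval, fun x => ?_, ?_⟩
  · rw [← gen_mulVec_apply, hV', mulVec_integral_exp_smul_mulVec_eq_neg _ f hint]
    simp
  · change V ⬝ᵥ ρ = 0
    rw [dotProduct_comm, hV']
    exact dotProduct_integral_exp_smul_mulVec_eq_zero hρstat hρf hint

/-- For a centered `f`, the accumulated excess `V(x) = ∫₀^∞ (e^{tL} f)(x) dt` converges, solves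
the Poisson equation `LV + f = 0`, and is centered: `⟨V⟩ˢ = 0`. -/
theorem quasipotential_integral_solves_poisson
    {K : Type*} [Fintype K] [DecidableEq K] [Nonempty K]
    (k : K → K → ℝ) (hk : ∀ x y : K, x ≠ y → 0 ≤ k x y)
    (hirr : StronglyConnected k)
    (ρ : K → ℝ) (hρpos : ∀ x, 0 < ρ x) (hρsum : ∑ x, ρ x = 1)
    (hρstat : Matrix.vecMul ρ (gen k) = 0)
    (f : K → ℝ) (hf : ∑ x, f x * ρ x = 0)
    (V : K → ℝ)
    (hV : ∀ x, V x = ∫ t in Set.Ioi (0 : ℝ), (NormedSpace.exp (t • gen k)).mulVec f x) :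
    (∀ x, MeasureTheory.IntegrableOn
        (fun t : ℝ => (NormedSpace.exp (t • gen k)).mulVec f x) (Set.Ioi 0)) ∧
    (∀ x, (∑ y, k x y * (V y - V x)) + f x = 0) ∧
    (∑ x, V x * ρ x = 0) :=
  quasipotential_integral_solves_poisson_general k hk hirr ρ hρsum hρstat f hf V hV
end

section
/- (Graphical representation of mean first-passage times) For all x ≠ z in K, the mean first-passage time satisfies τ(x,z) = w(x,z)/w(z), where w(x,z) is the total weight of all rooted spanning two-tree forests in which x and z lie in different trees and the tree containing z is rooted at z (the other tree rooted at any of its vertices), and w(z) is the total weight of all spanning trees rooted at z. Equivalently, the function x ↦ w(x,z)/w(z) (with value 0 at x = z) satisfies ∑_y k(x,y)[τ(y,z) − τ(x,z)] + 1 = 0 for all x ≠ z. -/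
open scoped Classical

/-- A spanning rooted forest of the digraph of `k`, encoded functionally: each non-fixed
vertex `z` carries the single outgoing arc `(z, F z)`, every vertex eventually reaches a
fixed point (the root of its tree, toward which all arcs of the tree are directed, so there
are no cycles), and every arc is an arc of the digraph. -/
def IsSpForest {K : Type*} (k : K → K → ℝ) (F : K → K) : Prop :=
  (∀ z, ∃ n : ℕ, F (F^[n] z) = F^[n] z) ∧ ∀ z, F z ≠ z → 0 < k z (F z)

/-- The weight of a forest: the product of the rates `k z (F z)` over its arcs. -/
noncomputable def forestWeight {K : Type*} [Fintype K] [DecidableEq K]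
    (k : K → K → ℝ) (F : K → K) : ℝ :=
  ∏ z ∈ Finset.univ.filter (fun z => F z ≠ z), k z (F z)

/-- A spanning tree rooted at `x`: a spanning forest whose only root is `x`. -/
def IsSpTree {K : Type*} [Fintype K] [DecidableEq K] (k : K → K → ℝ) (F : K → K) (x : K) :
    Prop :=
  IsSpForest k F ∧ Finset.univ.filter (fun z => F z = z) = {x}

/-- `w(x)`: the total weight of all spanning trees rooted at `x`. -/
noncomputable def treeWt {K : Type*} [Fintype K] [DecidableEq K] (k : K → K → ℝ) (x : K) : ℝ :=
  ∑ F ∈ Finset.univ.filter (fun F : K → K => IsSpTree k F x), forestWeight k F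

/-- `W = ∑_x w(x)`: the total weight of all rooted spanning trees. -/
noncomputable def treeWtTotal {K : Type*} [Fintype K] [DecidableEq K] (k : K → K → ℝ) : ℝ :=
  ∑ x, treeWt k x

/-- A rooted spanning two-tree forest: a spanning forest with exactly two roots. -/
def IsTwoForest {K : Type*} [Fintype K] [DecidableEq K] (k : K → K → ℝ) (F : K → K) : Prop :=
  IsSpForest k F ∧ (Finset.univ.filter (fun z => F z = z)).card = 2

/-- `w(x → y)`: the total weight of all rooted spanning two-tree forests in which `x` and `y`
lie in the same tree, that tree being rooted at `y`. -/
noncomputable def wTo {K : Type*} [Fintype K] [DecidableEq K] (k : K → K → ℝ) (x y : K) : ℝ :=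
  ∑ F ∈ Finset.univ.filter
      (fun F : K → K => IsTwoForest k F ∧ F y = y ∧ ∃ n : ℕ, F^[n] x = y),
    forestWeight k F

/-- `w(x, z)`: the total weight of all rooted spanning two-tree forests in which `x` and `z`
lie in different trees and the tree containing `z` is rooted at `z`. -/
noncomputable def wSep {K : Type*} [Fintype K] [DecidableEq K] (k : K → K → ℝ) (x z : K) : ℝ :=
  ∑ F ∈ Finset.univ.filter
      (fun F : K → K => IsTwoForest k F ∧ F z = z ∧ ¬∃ n : ℕ, F^[n] x = z),
    forestWeight k F

/-- `W₂`: the total weight of all rooted spanning two-tree forests. -/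
noncomputable def wTwoTotal {K : Type*} [Fintype K] [DecidableEq K] (k : K → K → ℝ) : ℝ :=
  ∑ F ∈ Finset.univ.filter (fun F : K → K => IsTwoForest k F), forestWeight k F


/-!
By the maximum principle (a maximum of a function that is `k`-harmonic off `z` spreads along the
paths to `z` given by strong connectivity), the first-passage equation has at most one solution
vanishing at `z`. So it suffices that `x ↦ w(x,z)/w(z)` solves it, i.e. that
`∑_y k(x,y) (w(x,z) - w(y,z)) = w(z)` for `x ≠ z`. The difference `w(x,z) - w(y,z)` is the weight
of the two-forests with `y` but not `x` in the tree of `z`, minus the weight of those with `x` but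
not `y` there. In a forest of the first kind where `x` is a root, adding the arc `x → y` gives a
spanning tree rooted at `z`, bijectively. Otherwise, replacing the arc `x → F x` by `x → y` turns
it into a forest of the second kind for the pair `(F x, x)`, bijectively and with the weights
`k(x,y) w(F)` matching, so these terms cancel.
-/

open Finset Function

section Reaches

variable {α : Type*} {F : α → α} {a b c x y : α}

def Reaches (F : α → α) (a b : α) : Prop := ∃ n : ℕ, F^[n] a = b

theorem Reaches.refl (F : α → α) (a : α) : Reaches F a a := ⟨0, rfl⟩

theorem reaches_apply (F : α → α) (a : α) : Reaches F a (F a) := ⟨1, rfl⟩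

theorem Reaches.trans (hab : Reaches F a b) (hbc : Reaches F b c) : Reaches F a c := by
  obtain ⟨m, rfl⟩ := hab
  obtain ⟨n, rfl⟩ := hbc
  exact ⟨n + m, iterate_add_apply F n m a⟩

theorem Reaches.of_apply (h : Reaches F (F a) b) : Reaches F a b := (reaches_apply F a).trans h

theorem Reaches.apply_of_ne (h : Reaches F a b) (hab : a ≠ b) : Reaches F (F a) b := by
  obtain ⟨_ | n, rfl⟩ := h
  · exact absurd rfl hab
  · exact ⟨n, (iterate_succ_apply F n a).symm⟩

theorem ne_of_not_reaches (h : ¬Reaches F a b) : a ≠ b :=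
  fun hab => h (hab ▸ Reaches.refl F a)

theorem Reaches.eq_of_fixed (ha : F a = a) (h : Reaches F a b) : b = a := by
  obtain ⟨n, rfl⟩ := h
  exact iterate_fixed ha n

theorem Reaches.total (hab : Reaches F a b) (hac : Reaches F a c) :
    Reaches F b c ∨ Reaches F c b := by
  obtain ⟨m, rfl⟩ := hab
  obtain ⟨n, rfl⟩ := hac
  rcases le_total m n with h | h
  · obtain ⟨d, rfl⟩ := Nat.exists_eq_add_of_le h
    exact Or.inl ⟨d, by rw [Nat.add_comm, iterate_add_apply]⟩
  · obtain ⟨d, rfl⟩ := Nat.exists_eq_add_of_le h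
    exact Or.inr ⟨d, by rw [Nat.add_comm, iterate_add_apply]⟩

theorem Reaches.fixed_unique (hb : F b = b) (hc : F c = c) (hab : Reaches F a b)
    (hac : Reaches F a c) : b = c := by
  rcases hab.total hac with h | h
  · exact (h.eq_of_fixed hb).symm
  · exact h.eq_of_fixed hc

theorem Reaches.not_reaches_of_fixed (hb : F b = b) (hc : F c = c) (hbc : b ≠ c)
    (hab : Reaches F a b) : ¬Reaches F a c :=
  fun hac => hbc (hab.fixed_unique hb hc hac)

/-- An orbit that passes through `F a` and comes back to `a` cycles, so it can only reach a
fixed point if `a` is one. -/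
theorem apply_eq_of_reaches_apply (hroot : ∃ c, F c = c ∧ Reaches F a c)
    (h : Reaches F (F a) a) : F a = a := by
  have hcycle : ∀ n, Reaches F (F^[n] a) a := by
    intro n
    induction n with
    | zero => exact Reaches.refl F a
    | succ n ih =>
      rw [iterate_succ_apply']
      by_cases hn : F^[n] a = a
      · rwa [hn]
      · exact ih.apply_of_ne hn
  obtain ⟨_, hc, n, rfl⟩ := hroot
  rw [(hcycle n).eq_of_fixed hc]
  exact hc

variable [DecidableEq α]

theorem reaches_update_iff (h : ¬Reaches F a x) :
    Reaches (update F x y) a b ↔ Reaches F a b := by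
  suffices hiter : ∀ n a, ¬Reaches F a x → (update F x y)^[n] a = F^[n] a from
    exists_congr fun n => by rw [hiter n a h]
  intro n
  induction n with
  | zero => exact fun _ _ => rfl
  | succ n ih =>
    intro a ha
    rw [iterate_succ_apply, iterate_succ_apply, update_of_ne (ne_of_not_reaches ha),
      ih _ fun h => ha h.of_apply]

theorem Reaches.update_target (h : Reaches F a x) : Reaches (update F x y) a x := by
  obtain ⟨n, hn⟩ := h
  induction n generalizing a with
  | zero => exact ⟨0, hn⟩
  | succ n ih =>
    by_cases hax : a = x
    · exact hax ▸ Reaches.refl _ a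
    · have h := ih (a := F a) (by rwa [iterate_succ_apply] at hn)
      rw [← update_of_ne hax y F] at h
      exact h.of_apply

theorem exists_fixed_reaches_update (hF : ∀ a, ∃ c, F c = c ∧ Reaches F a c)
    (hx : ∃ c, update F x y c = c ∧ Reaches (update F x y) x c) (a : α) :
    ∃ c, update F x y c = c ∧ Reaches (update F x y) a c := by
  by_cases hax : Reaches F a x
  · obtain ⟨c, hc, hxc⟩ := hx
    exact ⟨c, hc, hax.update_target.trans hxc⟩
  · obtain ⟨c, hc, hac⟩ := hF a
    have hcx : c ≠ x := fun h => hax (h ▸ hac)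
    exact ⟨c, by rwa [update_of_ne hcx], (reaches_update_iff hax).2 hac⟩

end Reaches

section Forest

variable {K : Type*} {k : K → K → ℝ} {F G : K → K} {r s x y z : K}

theorem isSpForest_iff : IsSpForest k F ↔
    (∀ a, ∃ c, F c = c ∧ Reaches F a c) ∧ ∀ v, F v ≠ v → 0 < k v (F v) := by
  refine and_congr_left' ⟨fun h a => ?_, fun h a => ?_⟩
  · obtain ⟨n, hn⟩ := h a
    exact ⟨F^[n] a, hn, n, rfl⟩
  · obtain ⟨_, hc, n, rfl⟩ := h a
    exact ⟨n, hc⟩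

theorem IsSpForest.exists_root (hF : IsSpForest k F) (a : K) : ∃ c, F c = c ∧ Reaches F a c :=
  (isSpForest_iff.1 hF).1 a

theorem IsSpForest.apply_eq_of_reaches (hF : IsSpForest k F) (h : Reaches F (F x) x) :
    F x = x :=
  apply_eq_of_reaches_apply (hF.exists_root x) h

variable [DecidableEq K]

theorem IsSpForest.update (hF : IsSpForest k F) (hy : y = x ∨ 0 < k x y ∧ ¬Reaches F y x) :
    IsSpForest k (update F x y) := by
  refine isSpForest_iff.2 ⟨exists_fixed_reaches_update hF.exists_root ?_, fun v hv => ?_⟩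
  · rcases hy with rfl | ⟨-, hyx⟩
    · exact ⟨y, update_self y y F, Reaches.refl _ y⟩
    · obtain ⟨c, hc, hyc⟩ := hF.exists_root y
      have hcx : c ≠ x := fun h => hyx (h ▸ hyc)
      refine ⟨c, by rwa [update_of_ne hcx], Reaches.of_apply ?_⟩
      rw [update_self]
      exact (reaches_update_iff hyx).2 hyc
  · by_cases hvx : v = x
    · subst hvx
      rw [update_self] at hv ⊢
      exact (hy.resolve_left hv).1
    · rw [update_of_ne hvx] at hv ⊢
      exact hF.2 v hv

variable [Fintype K]

def roots (F : K → K) : Finset K := univ.filter fun v => F v = v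

@[simp]
theorem mem_roots {v : K} : v ∈ roots F ↔ F v = v := by simp [roots]

theorem roots_update_of_ne (hyx : y ≠ x) : roots (update F x y) = (roots F).erase x := by
  ext v
  by_cases hvx : v = x <;> simp [hvx, hyx, update_of_ne]

theorem roots_update_self : roots (update F x x) = insert x (roots F) := by
  ext v
  by_cases hvx : v = x <;> simp [hvx, update_of_ne]

theorem isTwoForest_of_roots (hF : IsSpForest k F) (h : roots F = {r, s}) (hrs : r ≠ s) :
    IsTwoForest k F :=
  ⟨hF, show (roots F).card = 2 by rw [h, card_pair hrs]⟩

theorem IsTwoForest.exists_root_of_not_reaches (hF : IsTwoForest k F) (hz : F z = z)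
    (ha : ¬Reaches F x z) : ∃ r, r ≠ z ∧ Reaches F x r ∧ roots F = {r, z} := by
  obtain ⟨r, hr, hxr⟩ := hF.1.exists_root x
  have hrz : r ≠ z := fun h => ha (h ▸ hxr)
  refine ⟨r, hrz, hxr, (eq_of_subset_of_card_le ?_ ?_).symm⟩
  · simp [insert_subset_iff, hr, hz]
  · rw [card_pair hrz]
    exact hF.2.le

end Forest

section TwoForests

variable {K : Type*} [Fintype K] [DecidableEq K] {k : K → K → ℝ} {F G : K → K} {r s x y z : K}

theorem IsSpTree.apply_eq_iff (hG : IsSpTree k G z) {v : K} : G v = v ↔ v = z := by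
  simpa using Finset.ext_iff.1 hG.2 v

theorem IsSpTree.reaches (hG : IsSpTree k G z) (a : K) : Reaches G a z := by
  obtain ⟨c, hc, hac⟩ := hG.1.exists_root a
  rwa [hG.apply_eq_iff.1 hc] at hac

theorem IsSpForest.update_across (hF : IsSpForest k F) (hroots : roots F = {r, s}) (hrs : r ≠ s)
    (hxr : Reaches F x r) (hx : x ≠ r) (hys : Reaches F y s) (hkxy : 0 < k x y) :
    IsSpForest k (Function.update F x y) ∧ roots (Function.update F x y) = {r, s} ∧
      Reaches (Function.update F x y) x s ∧ Reaches (Function.update F x y) (F x) r := by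
  have hr : F r = r := mem_roots.1 (by simp [hroots])
  have hs : F s = s := mem_roots.1 (by simp [hroots])
  have hFx : F x ≠ x := fun h => hx (hxr.eq_of_fixed h).symm
  have hxs : x ≠ s := by
    rintro rfl
    exact hrs (hxr.eq_of_fixed hs)
  have hyx : ¬Reaches F y x := fun h => hrs ((h.trans hxr).fixed_unique hr hs hys)
  refine ⟨hF.update (Or.inr ⟨hkxy, hyx⟩), ?_, ?_, ?_⟩
  · rw [roots_update_of_ne (ne_of_not_reaches hyx), hroots,
      erase_eq_of_notMem (by simp [hx, hxs])]
  · refine Reaches.of_apply ?_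
    rw [update_self]
    exact (reaches_update_iff hyx).2 hys
  · exact (reaches_update_iff fun h => hFx (hF.apply_eq_of_reaches h)).2 (hxr.apply_of_ne hx)

def IsCrossForest (k : K → K → ℝ) (z a b : K) (F : K → K) : Prop :=
  IsTwoForest k F ∧ F z = z ∧ ¬Reaches F a z ∧ Reaches F b z

noncomputable def crossWt (k : K → K → ℝ) (z a b : K) : ℝ :=
  ∑ F ∈ univ.filter (IsCrossForest k z a b), forestWeight k F

theorem IsCrossForest.ne (hF : IsCrossForest k z x y F) : x ≠ y := by
  rintro rfl
  exact hF.2.2.1 hF.2.2.2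

theorem wSep_eq (k : K → K → ℝ) (x z : K) :
    wSep k x z = ∑ F ∈ univ.filter (fun F => IsTwoForest k F ∧ F z = z ∧ ¬Reaches F x z),
      forestWeight k F :=
  rfl

theorem wSep_sub_wSep (k : K → K → ℝ) (z a b : K) :
    wSep k a z - wSep k b z = crossWt k z a b - crossWt k z b a := by
  simp only [wSep_eq, crossWt, IsCrossForest, sum_filter, ← sum_sub_distrib]
  refine sum_congr rfl fun F _ => ?_
  by_cases ha : Reaches F a z <;> by_cases hb : Reaches F b z <;> simp [ha, hb]

theorem IsCrossForest.isSpTree_update (hF : IsCrossForest k z x y F) (hFx : F x = x)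
    (hkxy : 0 < k x y) : IsSpTree k (update F x y) z := by
  obtain ⟨hTF, hz, hxz, hyz⟩ := hF
  obtain ⟨r, hrz, hxr, hroots⟩ := hTF.exists_root_of_not_reaches hz hxz
  obtain rfl : r = x := hxr.eq_of_fixed hFx
  have hyr : ¬Reaches F y r := hyz.not_reaches_of_fixed hz hFx hrz.symm
  refine ⟨hTF.1.update (Or.inr ⟨hkxy, hyr⟩), ?_⟩
  change roots (update F r y) = {z}
  rw [roots_update_of_ne (ne_of_not_reaches hyr), hroots,
    erase_insert (by simpa using hrz)]

theorem IsSpTree.isCrossForest_update_self (hG : IsSpTree k G z) (hxz : x ≠ z) :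
    IsCrossForest k z x (G x) (update G x x) := by
  have hGx : G x ≠ x := fun h => hxz (hG.apply_eq_iff.1 h)
  have hGz : update G x x z = z := by rw [update_of_ne hxz.symm, hG.apply_eq_iff]
  refine ⟨isTwoForest_of_roots (hG.1.update (Or.inl rfl)) ?_ hxz, hGz, ?_, ?_⟩
  · rw [roots_update_self]
    exact congrArg (insert x) hG.2
  · exact (Reaches.refl _ x).not_reaches_of_fixed (update_self x x G) hGz hxz
  · exact (reaches_update_iff fun h => hGx (hG.1.apply_eq_of_reaches h)).2 (hG.reaches _)

theorem IsCrossForest.update_of_apply_ne (hF : IsCrossForest k z x y F) (hFx : F x ≠ x)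
    (hkxy : 0 < k x y) : IsCrossForest k z (F x) x (update F x y) := by
  obtain ⟨hTF, hz, hxz, hyz⟩ := hF
  obtain ⟨r, hrz, hxr, hroots⟩ := hTF.exists_root_of_not_reaches hz hxz
  have hxr' : x ≠ r := fun h => hFx (mem_roots.1 (by simp [hroots, h]))
  obtain ⟨hGF, hGroots, hGxz, hGr⟩ := hTF.1.update_across hroots hrz hxr hxr' hyz hkxy
  have hGz : update F x y z = z := mem_roots.1 (by simp [hGroots])
  have hGr' : update F x y r = r := mem_roots.1 (by simp [hGroots])
  exact ⟨isTwoForest_of_roots hGF hGroots hrz, hGz, hGr.not_reaches_of_fixed hGr' hGz hrz, hGxz⟩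

theorem IsCrossForest.update_of_ne_root (hG : IsCrossForest k z y x G) (hxz : x ≠ z)
    (hkxy : 0 < k x y) : IsCrossForest k z x (G x) (update G x y) := by
  obtain ⟨hTG, hz, hyz, hxz'⟩ := hG
  obtain ⟨r, hrz, hyr, hroots⟩ := hTG.exists_root_of_not_reaches hz hyz
  rw [pair_comm] at hroots
  obtain ⟨hFF, hFroots, hFxr, hFz⟩ := hTG.1.update_across hroots hrz.symm hxz' hxz hyr hkxy
  have hFz' : update G x y z = z := mem_roots.1 (by simp [hFroots])
  have hFr : update G x y r = r := mem_roots.1 (by simp [hFroots])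
  exact ⟨isTwoForest_of_roots hFF hFroots hrz.symm, hFz',
    hFxr.not_reaches_of_fixed hFr hFz' hrz, hFz⟩

theorem forestWeight_eq_prod (k : K → K → ℝ) (F : K → K) :
    forestWeight k F = ∏ v, if F v = v then 1 else k v (F v) := by
  simp only [forestWeight, prod_filter, ite_not]

theorem forestWeight_update_mul (k : K → K → ℝ) (F : K → K) (x y : K) :
    forestWeight k (update F x y) * (if F x = x then 1 else k x (F x)) =
      (if y = x then 1 else k x y) * forestWeight k F := by
  have hrest : ∏ v ∈ univ.erase x, (if update F x y v = v then 1 else k v (update F x y v)) =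
      ∏ v ∈ univ.erase x, (if F v = v then 1 else k v (F v)) :=
    prod_congr rfl fun v hv => by rw [update_of_ne (ne_of_mem_erase hv)]
  rw [forestWeight_eq_prod, forestWeight_eq_prod, ← mul_prod_erase univ _ (mem_univ x),
    ← mul_prod_erase univ _ (mem_univ x), update_self, hrest]
  ring

end TwoForests

theorem sum_mul_sum_filter_eq_sum_filter_pos {ι κ : Type*} [Fintype ι] [Fintype κ]
    {c : ι → ℝ} {f : κ → ℝ} {P : ι → κ → Prop} (hc : ∀ i j, P i j → 0 ≤ c i) :
    ∑ i, c i * ∑ j ∈ univ.filter (P i), f j =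
      ∑ p ∈ univ.filter (fun p : ι × κ => 0 < c p.1 ∧ P p.1 p.2), c p.1 * f p.2 := by
  rw [sum_filter, Fintype.sum_prod_type]
  refine sum_congr rfl fun i _ => ?_
  rw [mul_sum, sum_filter]
  refine sum_congr rfl fun j _ => ?_
  by_cases hP : P i j
  · rcases (hc i j hP).lt_or_eq with hci | hci
    · simp [hci, hP]
    · simp [← hci]
  · simp [hP]

section CrossForestSums

variable {K : Type*} [Fintype K] [DecidableEq K] {k : K → K → ℝ} {x z : K}

theorem sum_crossForests_root_eq_treeWt (hxz : x ≠ z) :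
    ∑ p ∈ univ.filter (fun p : K × (K → K) =>
        (0 < k x p.1 ∧ IsCrossForest k z x p.1 p.2) ∧ p.2 x = x), k x p.1 * forestWeight k p.2 =
      treeWt k z := by
  refine sum_nbij' (fun p => update p.2 x p.1) (fun G => (G x, update G x x)) ?_ ?_ ?_ ?_ ?_
  · rintro ⟨y, F⟩ hp
    simp only [mem_filter, mem_univ, true_and] at hp ⊢
    exact hp.1.2.isSpTree_update hp.2 hp.1.1
  · intro G hG
    simp only [mem_filter, mem_univ, true_and] at hG ⊢
    have hGx : G x ≠ x := fun h => hxz (hG.apply_eq_iff.1 h)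
    exact ⟨⟨hG.1.2 x hGx, hG.isCrossForest_update_self hxz⟩, update_self x x G⟩
  · rintro ⟨y, F⟩ hp
    simp only [mem_filter, mem_univ, true_and] at hp
    exact Prod.ext (update_self x y F) (by rw [update_idem, update_eq_self_iff]; exact hp.2.symm)
  · intro G _
    simp only [update_idem, update_eq_self]
  · rintro ⟨y, F⟩ hp
    simp only [mem_filter, mem_univ, true_and] at hp
    simpa [hp.2, hp.1.2.ne.symm, mul_comm] using (forestWeight_update_mul k F x y).symm

theorem sum_crossForests_nonroot_eq_reversed (hxz : x ≠ z) :
    ∑ p ∈ univ.filter (fun p : K × (K → K) =>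
        (0 < k x p.1 ∧ IsCrossForest k z x p.1 p.2) ∧ ¬p.2 x = x), k x p.1 * forestWeight k p.2 =
      ∑ p ∈ univ.filter (fun p : K × (K → K) => 0 < k x p.1 ∧ IsCrossForest k z p.1 x p.2),
        k x p.1 * forestWeight k p.2 := by
  refine sum_nbij' (fun p => (p.2 x, update p.2 x p.1)) (fun p => (p.2 x, update p.2 x p.1))
    ?_ ?_ ?_ ?_ ?_
  · rintro ⟨y, F⟩ hp
    simp only [mem_filter, mem_univ, true_and] at hp ⊢
    exact ⟨hp.1.2.1.1.2 x hp.2, hp.1.2.update_of_apply_ne hp.2 hp.1.1⟩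
  · rintro ⟨y, G⟩ hp
    simp only [mem_filter, mem_univ, true_and] at hp ⊢
    have hGx : G x ≠ x := fun h => hxz (hp.2.2.2.2.eq_of_fixed h).symm
    refine ⟨⟨hp.2.1.1.2 x hGx, hp.2.update_of_ne_root hxz hp.1⟩, ?_⟩
    rw [update_self]
    exact hp.2.ne
  iterate 2
    · rintro ⟨y, F⟩ -
      simp only [update_self, update_idem, update_eq_self]
  · rintro ⟨y, F⟩ hp
    simp only [mem_filter, mem_univ, true_and] at hp
    simpa [hp.2, hp.1.2.ne.symm, mul_comm] using (forestWeight_update_mul k F x y).symm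

end CrossForestSums

section Identity

variable {K : Type*} [Fintype K] [DecidableEq K] {k : K → K → ℝ} {x z : K}

theorem sum_mul_wSep_sub_add_treeWt (hk : ∀ x y : K, x ≠ y → 0 ≤ k x y) (hxz : x ≠ z) :
    ∑ y, k x y * (wSep k y z - wSep k x z) + treeWt k z = 0 := by
  simp only [wSep_sub_wSep, mul_sub, sum_sub_distrib, crossWt]
  rw [sum_mul_sum_filter_eq_sum_filter_pos fun y F hF => hk x y hF.ne.symm,
    sum_mul_sum_filter_eq_sum_filter_pos fun y F hF => hk x y hF.ne,
    ← sum_filter_add_sum_filter_not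
      (univ.filter fun p : K × (K → K) => 0 < k x p.1 ∧ IsCrossForest k z x p.1 p.2)
      (fun p => p.2 x = x), filter_filter, filter_filter,
    sum_crossForests_root_eq_treeWt hxz, sum_crossForests_nonroot_eq_reversed hxz]
  ring

theorem wSep_self (k : K → K → ℝ) (z : K) : wSep k z z = 0 :=
  sum_eq_zero fun _ hF => absurd (Reaches.refl _ z) (mem_filter.1 hF).2.2.2

end Identity

section Connectivity

variable {K : Type*} {k : K → K → ℝ}

def ReachesIn (k : K → K → ℝ) : ℕ → K → K → Prop
  | 0, a, b => a = b
  | n + 1, a, b => a = b ∨ ∃ c, 0 < k a c ∧ ReachesIn k n c b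

theorem exists_reachesIn_of_reflTransGen {a b : K}
    (h : Relation.ReflTransGen (fun a b => 0 < k a b) a b) : ∃ n, ReachesIn k n a b := by
  induction h using Relation.ReflTransGen.head_induction_on with
  | refl => exact ⟨0, rfl⟩
  | head hac _ ih =>
    obtain ⟨n, hn⟩ := ih
    exact ⟨n + 1, Or.inr ⟨_, hac, hn⟩⟩

variable [Fintype K] [DecidableEq K]

theorem forestWeight_pos {F : K → K} (hF : IsSpForest k F) : 0 < forestWeight k F :=
  prod_pos fun v hv => hF.2 v (mem_filter.1 hv).2

/-- Pointing every `v ≠ z` to a neighbour strictly closer to `z` yields a spanning tree. -/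
theorem exists_isSpTree (hirr : StronglyConnected k) (z : K) : ∃ F, IsSpTree k F z := by
  have hd : ∀ v, ∃ n, ReachesIn k n v z := fun v => exists_reachesIn_of_reflTransGen (hirr v z)
  let d v := Nat.find (hd v)
  have hstep : ∀ v, v ≠ z → ∃ w, 0 < k v w ∧ d w < d v := by
    intro v hv
    have hdv : ReachesIn k (d v) v z := Nat.find_spec (hd v)
    obtain ⟨n, hn⟩ : ∃ n, d v = n + 1 :=
      Nat.exists_eq_succ_of_ne_zero fun h => hv (by rw [h] at hdv; exact hdv)
    rw [hn] at hdv
    obtain ⟨w, hvw, hw⟩ := hdv.resolve_left hv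
    exact ⟨w, hvw, hn ▸ Nat.lt_succ_of_le (Nat.find_min' (hd w) hw)⟩
  choose! F hF using hstep
  have hT : ∀ v, v ≠ z → 0 < k v (update F z z v) ∧ d (update F z z v) < d v :=
    fun v hv => by rw [update_of_ne hv]; exact hF v hv
  have hreach : ∀ v, Reaches (update F z z) v z := by
    intro v
    induction h : d v using Nat.strong_induction_on generalizing v with
    | _ n ih =>
      by_cases hv : v = z
      · exact hv ▸ Reaches.refl _ v
      · exact (ih _ (h ▸ (hT v hv).2) _ rfl).of_apply
  refine ⟨update F z z, isSpForest_iff.2 ⟨fun a => ⟨z, update_self z z F, hreach a⟩,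
    fun v hv => (hT v fun h => hv (by rw [h, update_self])).1⟩, ?_⟩
  ext v
  simp only [mem_filter, mem_univ, true_and, mem_singleton]
  refine ⟨fun hv => by_contra fun hvz => (hT v hvz).2.ne (by rw [hv]), ?_⟩
  rintro rfl
  exact update_self v v F

theorem treeWt_pos (hirr : StronglyConnected k) (z : K) : 0 < treeWt k z := by
  obtain ⟨F, hF⟩ := exists_isSpTree hirr z
  exact sum_pos (fun G hG => forestWeight_pos (mem_filter.1 hG).2.1)
    ⟨F, mem_filter.2 ⟨mem_univ F, hF⟩⟩

theorem apply_eq_of_harmonic_of_forall_le (hk : ∀ x y : K, x ≠ y → 0 ≤ k x y)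
    {g : K → ℝ} {a b : K} (ha : ∑ y, k a y * (g y - g a) = 0) (hmax : ∀ y, g y ≤ g a)
    (hab : 0 < k a b) : g b = g a := by
  have hterm : ∀ y ∈ univ, k a y * (g y - g a) ≤ 0 := fun y _ => by
    by_cases hya : y = a
    · simp [hya]
    · exact mul_nonpos_of_nonneg_of_nonpos (hk a y (Ne.symm hya)) (sub_nonpos.2 (hmax y))
  rcases mul_eq_zero.1 ((sum_eq_zero_iff_of_nonpos hterm).1 ha b (mem_univ b)) with h | h
  · exact absurd h hab.ne'
  · exact sub_eq_zero.1 h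

theorem le_apply_of_harmonic (hk : ∀ x y : K, x ≠ y → 0 ≤ k x y) (hirr : StronglyConnected k)
    {g : K → ℝ} {z : K} (hg : ∀ x, x ≠ z → ∑ y, k x y * (g y - g x) = 0) (v : K) : g v ≤ g z := by
  obtain ⟨a, -, ha⟩ := exists_max_image univ g ⟨z, mem_univ z⟩
  suffices hpath : ∀ b, Relation.ReflTransGen (fun a b => 0 < k a b) b z →
      (∀ y, g y ≤ g b) → g z = g b by
    rw [hpath a (hirr a z) fun y => ha y (mem_univ y)]
    exact ha v (mem_univ v)
  intro b hb
  induction hb using Relation.ReflTransGen.head_induction_on with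
  | refl => exact fun _ => rfl
  | @head b c hbc _ ih =>
    intro hmax
    by_cases hbz : b = z
    · rw [hbz]
    · have hcb := apply_eq_of_harmonic_of_forall_le hk (hg b hbz) hmax hbc
      rw [ih (hcb ▸ hmax), hcb]

theorem eq_of_sum_mul_sub_eq (hk : ∀ x y : K, x ≠ y → 0 ≤ k x y) (hirr : StronglyConnected k)
    {f g : K → ℝ} {z : K} (hz : f z = g z)
    (hfg : ∀ x, x ≠ z → ∑ y, k x y * (f y - f x) = ∑ y, k x y * (g y - g x)) : f = g := by
  have hsub : ∀ f g : K → ℝ,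
      (∀ x, x ≠ z → ∑ y, k x y * (f y - f x) = ∑ y, k x y * (g y - g x)) →
        ∀ v, f v - g v ≤ f z - g z := by
    intro f g h
    refine le_apply_of_harmonic hk hirr (g := fun v => f v - g v) fun x hx => ?_
    rw [← sub_eq_zero.2 (h x hx), ← sum_sub_distrib]
    exact sum_congr rfl fun y _ => by ring
  funext v
  linarith [hsub f g hfg v, hsub g f (fun x hx => (hfg x hx).symm) v]

end Connectivity

/-- Graphical representation of mean first-passage times: `τ(x,z) = w(x,z)/w(z)` for `x ≠ z`;
equivalently, the function `x ↦ w(x,z)/w(z)` (vanishing at `z`) satisfies the first-passage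
Poisson equation. -/
theorem mfpt_graphical_representation
    {K : Type*} [Fintype K] [DecidableEq K]
    (k : K → K → ℝ) (hk : ∀ x y : K, x ≠ y → 0 ≤ k x y)
    (hirr : StronglyConnected k)
    (τ : K → K → ℝ) (hτ0 : ∀ z, τ z z = 0)
    (hτ : ∀ z x, x ≠ z → (∑ y, k x y * (τ y z - τ x z)) + 1 = 0) :
    (∀ z x, x ≠ z → τ x z = wSep k x z / treeWt k z) ∧
    (∀ z x, x ≠ z →
      (∑ y, k x y *
        ((if y = z then 0 else wSep k y z / treeWt k z) -
         (if x = z then 0 else wSep k x z / treeWt k z))) + 1 = 0) := by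
  have hpoisson : ∀ z x, x ≠ z →
      ∑ y, k x y * (wSep k y z / treeWt k z - wSep k x z / treeWt k z) + 1 = 0 := by
    intro z x hxz
    simp_rw [← sub_div, ← mul_div_assoc, ← sum_div]
    rw [div_add_one (treeWt_pos hirr z).ne', sum_mul_wSep_sub_add_treeWt hk hxz, zero_div]
  have hτ_eq : ∀ z, (τ · z) = fun x => wSep k x z / treeWt k z := fun z =>
    eq_of_sum_mul_sub_eq hk hirr (by rw [hτ0, wSep_self, zero_div]) fun x hx => by
      linarith [hτ z x hx, hpoisson z x hx]
  have hite : ∀ z y,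
      (if y = z then 0 else wSep k y z / treeWt k z) = wSep k y z / treeWt k z := by
    intro z y
    split_ifs with hy
    · rw [hy, wSep_self, zero_div]
    · rfl
  refine ⟨fun z x _ => congrFun (hτ_eq z) x, fun z x hxz => ?_⟩
  simpa only [hite] using hpoisson z x hxz
end
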